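/- arXiv:1006.0502 — 4 statements merged into one kernel-verified Lean document; each statement's English description precedes it below -/
import Mathlib

section
/- For each integer k ≥ 2 there exist R ∈ (0,∞), a Lebesgue-measurable Schur²-convex set A ⊆ ℝ^k, and points x₀, x₁ ∈ ℝ^k with x₁² ⪯ x₀², such that if X is a random vector uniformly distributed in the closed Euclidean ball {x ∈ ℝ^k : ‖x‖ ≤ R}, then ℙ(X ∈ A + x₁) < ℙ(X ∈ A + x₀); in particular, the function x ↦ ℙ(X ∈ A + x) is not Schur²-concave. -/
/-!
Take for `A` the cube `[-1, 1]^k` (the sup-norm closed unit ball): it is Schur²-convex because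
`y² ⪯ x²` bounds every `yᵢ²` by some `xⱼ²`. Let `x₀ = 5k e₀` and `x₁ = 3k e₀ + 4k e₁`, so that
`x₁² = (9k², 16k², 0, …) ⪯ (25k², 0, …) = x₀²`, and let `R² = 25k² + 11k`, the largest squared
norm on `A + x₀`. Then `A + x₀` lies in the ball, whereas `A + x₁` leaves it near its corner
`(1, …, 1) + x₁`, where the cross term `2⟨a, x₁⟩` reaches `14k` instead of `10k`. Since Lebesgue
measure is translation invariant, the ball catches all of `A + x₀` but only part of `A + x₁`.
-/

open MeasureTheory ProbabilityTheory Filter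
open scoped ENNReal

noncomputable section

/-- The standard Gaussian measure on `ℝ^k` (the `k`-fold product of `N(0,1)`). -/
def stdGaussianPi (k : ℕ) : MeasureTheory.Measure (Fin k → ℝ) :=
  MeasureTheory.Measure.pi fun _ => ProbabilityTheory.gaussianReal 0 1

/-- `a` majorizes `b`: the total sums agree and, for every `j`, the sum of the `j`
largest entries of `a` is at least the sum of the `j` largest entries of `b`
(formulated equivalently: every sum of entries of `b` over an index set is dominated by
a sum of entries of `a` over an index set of the same cardinality). -/
def Majorizes {k : ℕ} (a b : Fin k → ℝ) : Prop :=
  (∑ i, a i = ∑ i, b i) ∧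
  ∀ s : Finset (Fin k), ∃ t : Finset (Fin k),
    t.card = s.card ∧ ∑ i ∈ s, b i ≤ ∑ i ∈ t, a i

/-- The coordinatewise square `x² = (x₁², …, x_k²)` of a vector. -/
def sqv {k : ℕ} (x : Fin k → ℝ) : Fin k → ℝ := fun i => (x i) ^ 2

/-- `f` is Schur²-concave: `f x ≤ f y` whenever `x²` majorizes `y²`. -/
def Schur2Concave {k : ℕ} {α : Type*} [Preorder α] (f : (Fin k → ℝ) → α) : Prop :=
  ∀ x y : Fin k → ℝ, Majorizes (sqv x) (sqv y) → f x ≤ f y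

/-- `f` is Schur²-convex: `f x ≥ f y` whenever `x²` majorizes `y²`. -/
def Schur2Convex {k : ℕ} {α : Type*} [Preorder α] (f : (Fin k → ℝ) → α) : Prop :=
  ∀ x y : Fin k → ℝ, Majorizes (sqv x) (sqv y) → f y ≤ f x

/-- A set `A` is Schur²-convex if `x ∈ A` and `y² ⪯ x²` imply `y ∈ A`. -/
def Schur2ConvexSet {k : ℕ} (A : Set (Fin k → ℝ)) : Prop :=
  ∀ x y : Fin k → ℝ, x ∈ A → Majorizes (sqv x) (sqv y) → y ∈ A

/-- A set `A` is Schur²-concave if `x ∈ A` and `y² ⪰ x²` imply `y ∈ A`. -/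
def Schur2ConcaveSet {k : ℕ} (A : Set (Fin k → ℝ)) : Prop :=
  ∀ x y : Fin k → ℝ, x ∈ A → Majorizes (sqv y) (sqv x) → y ∈ A

open Metric Finset

section Majorization

variable {k : ℕ}

theorem Majorizes.exists_le {a b : Fin k → ℝ} (h : Majorizes a b) (i : Fin k) :
    ∃ j, b i ≤ a j := by
  obtain ⟨t, ht, hle⟩ := h.2 {i}
  obtain ⟨j, rfl⟩ := Finset.card_eq_one.1 (ht.trans (card_singleton i))
  exact ⟨j, by simpa using hle⟩

theorem majorizes_piSingle_sum {b : Fin k → ℝ} (hb : 0 ≤ b) (i : Fin k) :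
    Majorizes (Pi.single i (∑ j, b j)) b := by
  refine ⟨by simp, fun s => ?_⟩
  have hsum : ∑ j ∈ s, b j ≤ ∑ j, b j :=
    sum_le_sum_of_subset_of_nonneg s.subset_univ fun j _ _ => hb j
  rcases s.eq_empty_or_nonempty with rfl | ⟨j, hj⟩
  · exact ⟨∅, rfl, by simp⟩
  by_cases hi : i ∈ s
  · exact ⟨s, rfl, by simpa [hi] using hsum⟩
  · refine ⟨insert i (s.erase j), ?_, by simpa using hsum⟩
    rw [card_insert_of_notMem fun h => hi (mem_of_mem_erase h), card_erase_add_one hj]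

theorem majorizes_sqv_piSingle_of_sq_eq_add_sq {i j : Fin k} (hij : i ≠ j) {p q r : ℝ}
    (h : p ^ 2 = q ^ 2 + r ^ 2) :
    Majorizes (sqv (Pi.single i p)) (sqv (Pi.single i q + Pi.single j r)) := by
  have hsum : ∑ l, sqv (Pi.single i q + Pi.single j r) l = p ^ 2 := by
    simp [sqv, add_sq, sum_add_distrib, Pi.single_apply, hij.symm, h]
  have hsqv : sqv (Pi.single i p) = Pi.single i (p ^ 2) := by
    ext l
    by_cases hl : l = i <;> simp [sqv, hl]
  rw [hsqv, ← hsum]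
  exact majorizes_piSingle_sum (fun l => sq_nonneg _) i

theorem schur2ConvexSet_closedBall (r : ℝ) : Schur2ConvexSet (closedBall (0 : Fin k → ℝ) r) := by
  intro x y hx hxy
  rw [mem_closedBall_zero_iff] at hx ⊢
  refine (pi_norm_le_iff_of_nonneg ((norm_nonneg x).trans hx)).2 fun i => ?_
  obtain ⟨j, hj⟩ := hxy.exists_le i
  calc ‖y i‖ ≤ ‖x j‖ := by simpa [sqv, sq_le_sq] using hj
    _ ≤ r := (norm_le_pi_norm x j).trans hx

end Majorization

section Translates

variable {G : Type*} [MeasurableSpace G] [AddGroup G] [MeasurableAdd G] (ν : Measure G)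
  [ν.IsAddRightInvariant]

theorem measure_image_add_right (x : G) (A : Set G) : ν ((· + x) '' A) = ν A := by
  rw [Set.image_add_right, measure_preimage_add_right]

theorem measure_image_add_right_inter_lt {A B C : Set G} {x : G} (hA : ν A ≠ ∞)
    (hC : MeasurableSet C) (hCA : C ⊆ A) (hC₀ : ν C ≠ 0) (hCB : Disjoint ((· + x) '' C) B) :
    ν ((· + x) '' A ∩ B) < ν A := by
  have hsub : (· + x) '' A ∩ B ⊆ (· + x) '' (A \ C) := by
    rintro _ ⟨⟨a, ha, rfl⟩, hB⟩
    exact ⟨a, ⟨ha, fun haC => hCB.notMem_of_mem_left ⟨a, haC, rfl⟩ hB⟩, rfl⟩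
  calc ν ((· + x) '' A ∩ B) ≤ ν (A \ C) :=
        (measure_mono hsub).trans_eq (measure_image_add_right ν x _)
    _ = ν A - ν C :=
        measure_sdiff hCA hC.nullMeasurableSet (ne_top_of_le_ne_top hA (measure_mono hCA))
    _ < ν A := ENNReal.sub_lt_self hA (fun h => hC₀ (measure_mono_null hCA h)) hC₀

theorem smul_restrict_image_add_right_lt {A B C : Set G} {x₀ x₁ : G} (hB : MeasurableSet B)
    (hB₀ : ν B ≠ 0) (hB_top : ν B ≠ ∞) (hA : ν A ≠ ∞) (hC : MeasurableSet C) (hCA : C ⊆ A)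
    (hC₀ : ν C ≠ 0) (hAB : (· + x₀) '' A ⊆ B) (hCB : Disjoint ((· + x₁) '' C) B) :
    ((ν B)⁻¹ • ν.restrict B) ((· + x₁) '' A) < ((ν B)⁻¹ • ν.restrict B) ((· + x₀) '' A) := by
  simp only [Measure.smul_apply, smul_eq_mul, Measure.restrict_apply' hB,
    Set.inter_eq_left.2 hAB, measure_image_add_right]
  exact ENNReal.mul_lt_mul_right (ENNReal.inv_ne_zero.2 hB_top) (ENNReal.inv_ne_top.2 hB₀)
    (measure_image_add_right_inter_lt ν hA hC hCA hC₀ hCB)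

end Translates

section SumSq

variable {ι : Type*} [Fintype ι]

theorem volume_setOf_sum_sq_le_ne_zero {R : ℝ} (hR : 0 < R) :
    volume {x : ι → ℝ | ∑ i, x i ^ 2 ≤ R ^ 2} ≠ 0 := by
  have hopen : IsOpen {x : ι → ℝ | ∑ i, x i ^ 2 < R ^ 2} :=
    isOpen_lt (continuous_finsetSum _ fun i _ => (continuous_apply i).pow 2) continuous_const
  have hsub : {x : ι → ℝ | ∑ i, x i ^ 2 < R ^ 2} ⊆ {x | ∑ i, x i ^ 2 ≤ R ^ 2} :=
    Set.ofPred_subset_ofPred.2 fun _ => le_of_lt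
  have hpos := hopen.measure_pos volume ⟨0, by simpa using pow_pos hR 2⟩
  exact (measure_pos_of_superset hsub hpos.ne').ne'

theorem volume_setOf_sum_sq_le_ne_top (R : ℝ) :
    volume {x : ι → ℝ | ∑ i, x i ^ 2 ≤ R ^ 2} ≠ ∞ := by
  refine ne_top_of_le_ne_top (measure_closedBall_lt_top (x := 0) (r := |R|)).ne (measure_mono ?_)
  intro x hx
  refine mem_closedBall_zero_iff.2 ((pi_norm_le_iff_of_nonneg (abs_nonneg R)).2 fun i => ?_)
  rw [Real.norm_eq_abs, ← sq_le_sq]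
  exact (single_le_sum (fun j _ => sq_nonneg (x j)) (mem_univ i)).trans hx

theorem sq_add_sq_le_sum_sq (f : ι → ℝ) {i j : ι} (hij : i ≠ j) :
    f i ^ 2 + f j ^ 2 ≤ ∑ l, f l ^ 2 := by
  classical
  rw [← sum_pair (f := fun l => f l ^ 2) hij]
  exact sum_le_sum_of_subset_of_nonneg (subset_univ _) fun l _ _ => sq_nonneg (f l)

theorem closedBall_const_subset_closedBall_zero {c r s : ℝ} (h : |c| + r ≤ s) :
    closedBall (fun _ => c : ι → ℝ) r ⊆ closedBall 0 s :=
  closedBall_subset_closedBall' <| by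
    rw [dist_zero_right]
    linarith [pi_norm_const_le (ι := ι) c, Real.norm_eq_abs c]

theorem sum_sq_add_eq (a x : ι → ℝ) :
    ∑ i, (a i + x i) ^ 2 = a ⬝ᵥ a + 2 * (a ⬝ᵥ x) + x ⬝ᵥ x := by
  simp only [dotProduct, mul_sum, ← sum_add_distrib]
  exact sum_congr rfl fun i _ => by ring

theorem image_add_piSingle_closedBall_subset [DecidableEq ι] {p R : ℝ} (hp : 0 ≤ p) (i : ι)
    (hR : Fintype.card ι + 2 * p + p ^ 2 ≤ R ^ 2) :
    (· + Pi.single i p) '' closedBall (0 : ι → ℝ) 1 ⊆ {x | ∑ j, x j ^ 2 ≤ R ^ 2} := by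
  rintro _ ⟨a, ha, rfl⟩
  have hai : ∀ j, |a j| ≤ 1 := fun j =>
    (norm_le_pi_norm a j).trans (mem_closedBall_zero_iff.1 ha)
  have haa : a ⬝ᵥ a ≤ Fintype.card ι := by
    simpa [dotProduct] using
      sum_le_sum fun j (_ : j ∈ univ) => abs_le_one_iff_mul_self_le_one.1 (hai j)
  have hai' : a i ≤ 1 := (le_abs_self _).trans (hai i)
  simp only [Set.mem_ofPred_eq, Pi.add_apply, sum_sq_add_eq, dotProduct_single, Pi.single_eq_same]
  nlinarith

theorem disjoint_image_add_closedBall_const {x : ι → ℝ} (hx : 0 ≤ x) {c r R : ℝ} (hr : r ≤ c)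
    (hR : R ^ 2 < ∑ i, (c - r + x i) ^ 2) :
    Disjoint ((· + x) '' closedBall (fun _ => c) r) {y | ∑ i, y i ^ 2 ≤ R ^ 2} := by
  refine Set.disjoint_left.2 ?_
  rintro _ ⟨a, ha, rfl⟩ haR
  have hai : ∀ i, c - r ≤ a i := fun i => by
    have := (dist_le_pi_dist a _ i).trans (mem_closedBall.1 ha)
    rw [Real.dist_eq, abs_le] at this
    linarith
  have hsum : ∑ i, (c - r + x i) ^ 2 ≤ ∑ i, (a i + x i) ^ 2 :=
    sum_le_sum fun i _ =>
      pow_le_pow_left₀ (by linarith [show 0 ≤ x i from hx i]) (by linarith [hai i]) 2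
  exact (hR.trans_le (hsum.trans haR)).false

end SumSq

/-- Counterexample: for each `k ≥ 2` there are `R > 0`, a measurable Schur²-convex set
`A ⊆ ℝ^k`, and points `x₀, x₁` with `x₁² ⪯ x₀²` such that for `X` uniformly distributed
in the closed Euclidean ball of radius `R`, `ℙ(X ∈ A + x₁) < ℙ(X ∈ A + x₀)`;
in particular `x ↦ ℙ(X ∈ A + x)` is not Schur²-concave. -/
theorem not_schur2Concave_uniform_ball (k : ℕ) (hk : 2 ≤ k) :
    ∃ R : ℝ, 0 < R ∧
    ∃ A : Set (Fin k → ℝ), MeasurableSet A ∧ Schur2ConvexSet A ∧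
    ∃ x₀ x₁ : Fin k → ℝ, Majorizes (sqv x₀) (sqv x₁) ∧
      ∀ μ : MeasureTheory.Measure (Fin k → ℝ),
        μ = (volume {x : Fin k → ℝ | ∑ i, (x i) ^ 2 ≤ R ^ 2})⁻¹ •
              (volume : MeasureTheory.Measure (Fin k → ℝ)).restrict
                {x : Fin k → ℝ | ∑ i, (x i) ^ 2 ≤ R ^ 2} →
        μ ((· + x₁) '' A) < μ ((· + x₀) '' A) ∧
        ¬ Schur2Concave (fun x : Fin k → ℝ => μ ((· + x) '' A)) := by
  obtain ⟨i₀, i₁, hi⟩ : ∃ i₀ i₁ : Fin k, i₀ ≠ i₁ :=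
    ⟨⟨0, by omega⟩, ⟨1, by omega⟩, by simp [Fin.ext_iff]⟩
  have hk₀ : (0 : ℝ) < k := by positivity
  set x₁ : Fin k → ℝ := Pi.single i₀ (3 * (k : ℝ)) + Pi.single i₁ (4 * (k : ℝ))
  set R := √(25 * k ^ 2 + 11 * k)
  have hR₀ : 0 < R := Real.sqrt_pos.2 (by positivity)
  have hR : R ^ 2 = 25 * k ^ 2 + 11 * k := Real.sq_sqrt (by positivity)
  have hmaj := majorizes_sqv_piSingle_of_sq_eq_add_sq hi (p := 5 * k) (q := 3 * k) (r := 4 * k)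
    (by ring)
  have hCB : Disjoint ((· + x₁) '' closedBall (fun _ => 15 / 16) (1 / 16))
      {x | ∑ i, x i ^ 2 ≤ R ^ 2} := by
    refine disjoint_image_add_closedBall_const (add_nonneg
      (Pi.single_nonneg.2 (by positivity)) (Pi.single_nonneg.2 (by positivity))) (by norm_num) ?_
    calc R ^ 2 < (15 / 16 - 1 / 16 + x₁ i₀) ^ 2 + (15 / 16 - 1 / 16 + x₁ i₁) ^ 2 := by
          simp only [x₁, Pi.add_apply, Pi.single_eq_same, Pi.single_eq_of_ne hi,
            Pi.single_eq_of_ne hi.symm]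
          nlinarith
      _ ≤ _ := sq_add_sq_le_sum_sq (fun j => 15 / 16 - 1 / 16 + x₁ j) hi
  refine ⟨R, hR₀, closedBall 0 1, measurableSet_closedBall, schur2ConvexSet_closedBall 1, _, _,
    hmaj, ?_⟩
  rintro μ rfl
  have hlt := smul_restrict_image_add_right_lt volume (measurableSet_le (by fun_prop) (by fun_prop))
    (volume_setOf_sum_sq_le_ne_zero hR₀) (volume_setOf_sum_sq_le_ne_top R)
    measure_closedBall_lt_top.ne measurableSet_closedBall
    (closedBall_const_subset_closedBall_zero (by norm_num))
    (measure_closedBall_pos _ _ (by norm_num)).ne'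
    (image_add_piSingle_closedBall_subset (p := 5 * k) (by positivity) i₀
      (by rw [Fintype.card_fin, hR]; linarith)) hCB
  exact ⟨hlt, fun h => (h _ _ hmaj).not_gt hlt⟩
end
end

section
/- Let k ≥ 1 be an integer and let p, q be real numbers with p > q. If q ≤ 0 ≤ p ≤ 2, then the (p,q)-mean ⟨·⟩_{p,q} : ℝ^k → [0,∞) is Schur²-concave; if 0 ≤ q ≤ 2 ≤ p, then ⟨·⟩_{p,q} is Schur²-convex. -/
open MeasureTheory ProbabilityTheory Filter
open scoped ENNReal

noncomputable section

open Classical in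
/-- The `(p,q)`-mean `⟨x⟩_{p,q} = (∑ |x_j|^p / ∑ |x_j|^q)^(1/(p-q))` for real `p > q`,
with the conventions `|x_j|^0 := 1` even for `x_j = 0` (this is `Real.rpow`'s convention),
`⟨x⟩_{p,q} := 0` if `q < 0` and some `x_j = 0`, and `⟨0⟩_{p,q} := 0`. -/
noncomputable def pqMean {k : ℕ} (p q : ℝ) (x : Fin k → ℝ) : ℝ :=
  if x = 0 then 0
  else if q < 0 ∧ ∃ j, x j = 0 then 0
  else ((∑ j, |x j| ^ p) / (∑ j, |x j| ^ q)) ^ (p - q)⁻¹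

lemma sum_hinge {k : ℕ} {a b : Fin k → ℝ} (h : Majorizes a b) (c : ℝ) :
    ∑ i, max (b i - c) 0 ≤ ∑ i, max (a i - c) 0 := by
  classical
  set s : Finset (Fin k) := Finset.univ.filter (fun i => c < b i) with hs
  obtain ⟨t, hcard, hsum⟩ := h.2 s
  have h1 : ∑ i, max (b i - c) 0 = ∑ i ∈ s, (b i - c) := by
    rw [← Finset.sum_subset (Finset.subset_univ s)
      (fun i _ hi => ?_)]
    · exact Finset.sum_congr rfl fun i hi => max_eq_left
        (by simp [hs] at hi; linarith)
    · simp [hs] at hi; exact max_eq_right (by linarith)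
  have h2 : ∑ i ∈ s, (b i - c) ≤ ∑ i ∈ t, (a i - c) := by
    rw [Finset.sum_sub_distrib, Finset.sum_sub_distrib, Finset.sum_const, Finset.sum_const,
      hcard]
    exact sub_le_sub_right hsum _
  have h3 : ∑ i ∈ t, (a i - c) ≤ ∑ i, max (a i - c) 0 := by
    calc ∑ i ∈ t, (a i - c) ≤ ∑ i ∈ t, max (a i - c) 0 :=
          Finset.sum_le_sum fun i _ => le_max_left _ _
      _ ≤ ∑ i, max (a i - c) 0 :=
          Finset.sum_le_sum_of_subset_of_nonneg (Finset.subset_univ t)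
            (fun i _ _ => le_max_right _ _)
  linarith

lemma hlp_convex {k : ℕ} {a b : Fin k → ℝ} (h : Majorizes a b) {S : Set ℝ} {g : ℝ → ℝ}
    (hg : ConvexOn ℝ S g) (ha : ∀ i, a i ∈ S) (hb : ∀ i, b i ∈ S) :
    ∑ i, g (b i) ≤ ∑ i, g (a i) := by
  classical
  rcases Nat.eq_zero_or_pos k with hk0 | hk0
  · subst hk0; simp
  -- the finset of all values
  set P : Finset ℝ := (Finset.univ.image a) ∪ (Finset.univ.image b) with hP
  have hPne : P.Nonempty := by
    refine ⟨a ⟨0, hk0⟩, ?_⟩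
    simp [hP]
  have hPmemS : ∀ v ∈ P, v ∈ S := by
    intro v hv
    simp only [hP, Finset.mem_union, Finset.mem_image, Finset.mem_univ, true_and] at hv
    rcases hv with ⟨i, rfl⟩ | ⟨i, rfl⟩
    · exact ha i
    · exact hb i
  have haP : ∀ i, a i ∈ P := fun i => by simp [hP]
  have hbP : ∀ i, b i ∈ P := fun i => by simp [hP]
  set n : ℕ := P.card - 1 with hn
  have hcard : P.card = n + 1 := by
    have := Finset.card_pos.mpr hPne; omega
  set w : Fin (n + 1) ≃o {x // x ∈ P} := P.orderIsoOfFin hcard with hw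
  set u : ℕ → ℝ := fun j => (w ⟨min j n, Nat.lt_succ_of_le (min_le_right _ _)⟩ : ℝ) with hu
  have u_mono : Monotone u := by
    intro i j hij
    exact_mod_cast w.monotone (Fin.mk_le_mk.mpr (by omega))
  have u_strict : ∀ j, j < n → u j < u (j + 1) := by
    intro j hj
    exact_mod_cast w.strictMono (Fin.mk_lt_mk.mpr (by omega))
  have u_memP : ∀ j, u j ∈ P := fun j => (w _).2
  have u_surj : ∀ v ∈ P, ∃ m, m ≤ n ∧ u m = v := by
    intro v hv
    obtain ⟨m, hm⟩ := w.surjective ⟨v, hv⟩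
    refine ⟨m.1, Nat.lt_succ_iff.mp m.2, ?_⟩
    simp only [hu]
    rw [show (⟨min (m.1) n, Nat.lt_succ_of_le (min_le_right _ _)⟩ : Fin (n+1)) = m from
      Fin.ext (by simp; omega), hm]
  have u0_min : ∀ v ∈ P, u 0 ≤ v := by
    intro v hv
    obtain ⟨m, hm, rfl⟩ := u_surj v hv
    exact u_mono (Nat.zero_le m)
  have un_max : ∀ v ∈ P, v ≤ u n := by
    intro v hv
    obtain ⟨m, hm, rfl⟩ := u_surj v hv
    exact u_mono hm
  -- slopes
  set sl : ℕ → ℝ := fun j => (g (u (j + 1)) - g (u j)) / (u (j + 1) - u j) with hsl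
  have sl_mono : ∀ j, j + 1 < n → sl j ≤ sl (j + 1) := by
    intro j hj
    exact hg.slope_mono_adjacent (hPmemS _ (u_memP j)) (hPmemS _ (u_memP (j+2)))
      (u_strict j (by omega)) (u_strict (j+1) (by omega))
  -- interpolation identity
  have interp : ∀ v ∈ P, g v = g (u 0) +
      ∑ j ∈ Finset.range n, sl j * (max (v - u j) 0 - max (v - u (j + 1)) 0) := by
    intro v hv
    obtain ⟨m, hm, rfl⟩ := u_surj v hv
    have key : ∀ j ∈ Finset.range n,
        sl j * (max (u m - u j) 0 - max (u m - u (j + 1)) 0)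
          = if j < m then g (u (j + 1)) - g (u j) else 0 := by
      intro j hj
      rw [Finset.mem_range] at hj
      by_cases hjm : j < m
      · have h1 : u (j + 1) ≤ u m := u_mono (by omega)
        have h2 : u j < u (j + 1) := u_strict j hj
        rw [if_pos hjm, max_eq_left (by linarith), max_eq_left (by linarith)]
        have : u m - u j - (u m - u (j+1)) = u (j+1) - u j := by ring
        rw [this, hsl, div_mul_cancel₀ _ (by linarith)]
      · have h1 : u m ≤ u j := u_mono (by omega)
        have h2 : u j ≤ u (j + 1) := u_mono (by omega)
        rw [if_neg hjm, max_eq_right (by linarith), max_eq_right (by linarith)]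
        ring
    rw [Finset.sum_congr rfl key]
    have : ∑ j ∈ Finset.range n, (if j < m then g (u (j + 1)) - g (u j) else 0)
        = ∑ j ∈ Finset.range m, (g (u (j + 1)) - g (u j)) := by
      rw [← Finset.sum_subset (Finset.range_subset_range.mpr hm)]
      · exact Finset.sum_congr rfl fun j hj => if_pos (Finset.mem_range.mp hj)
      · intro j _ hj
        rw [Finset.mem_range] at hj
        exact if_neg (by omega)
    rw [this, Finset.sum_range_sub (fun j => g (u j))]
    ring
  -- hinge sums
  set D : ℕ → ℝ := fun j => (∑ i, max (a i - u j) 0) - (∑ i, max (b i - u j) 0) with hD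
  have D_nonneg : ∀ j, 0 ≤ D j := fun j => sub_nonneg.mpr (sum_hinge h (u j))
  have D_zero : D 0 = 0 := by
    have e1 : ∑ i, max (a i - u 0) 0 = ∑ i, (a i - u 0) :=
      Finset.sum_congr rfl fun i _ => max_eq_left (sub_nonneg.mpr (u0_min _ (haP i)))
    have e2 : ∑ i, max (b i - u 0) 0 = ∑ i, (b i - u 0) :=
      Finset.sum_congr rfl fun i _ => max_eq_left (sub_nonneg.mpr (u0_min _ (hbP i)))
    simp only [hD]
    rw [e1, e2, Finset.sum_sub_distrib, Finset.sum_sub_distrib, h.1]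
    ring
  have D_n : D n = 0 := by
    have e1 : ∑ i, max (a i - u n) 0 = 0 :=
      Finset.sum_eq_zero fun i _ => max_eq_right (sub_nonpos.mpr (un_max _ (haP i)))
    have e2 : ∑ i, max (b i - u n) 0 = 0 :=
      Finset.sum_eq_zero fun i _ => max_eq_right (sub_nonpos.mpr (un_max _ (hbP i)))
    simp only [hD]
    rw [e1, e2]; ring
  -- rewrite both sides via the interpolation
  have rwa' : ∀ (c : Fin k → ℝ), (∀ i, c i ∈ P) →
      ∑ i, g (c i) = k * g (u 0) + ∑ j ∈ Finset.range n,
        sl j * ((∑ i, max (c i - u j) 0) - (∑ i, max (c i - u (j + 1)) 0)) := by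
    intro c hc
    calc ∑ i, g (c i) = ∑ i : Fin k, (g (u 0) +
          ∑ j ∈ Finset.range n, sl j * (max (c i - u j) 0 - max (c i - u (j + 1)) 0)) :=
        Finset.sum_congr rfl fun i _ => interp (c i) (hc i)
      _ = k * g (u 0) + ∑ i : Fin k, ∑ j ∈ Finset.range n,
            sl j * (max (c i - u j) 0 - max (c i - u (j + 1)) 0) := by
        rw [Finset.sum_add_distrib, Finset.sum_const, Finset.card_univ, Fintype.card_fin,
          nsmul_eq_mul]
      _ = k * g (u 0) + ∑ j ∈ Finset.range n, ∑ i : Fin k,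
            sl j * (max (c i - u j) 0 - max (c i - u (j + 1)) 0) := by
        rw [Finset.sum_comm]
      _ = _ := by
        congr 1
        refine Finset.sum_congr rfl fun j _ => ?_
        rw [← Finset.mul_sum]
        congr 1
        rw [Finset.sum_sub_distrib]
  rw [rwa' a haP, rwa' b hbP]
  have goal2 : ∑ j ∈ Finset.range n,
      sl j * ((∑ i, max (b i - u j) 0) - (∑ i, max (b i - u (j + 1)) 0))
      ≤ ∑ j ∈ Finset.range n,
      sl j * ((∑ i, max (a i - u j) 0) - (∑ i, max (a i - u (j + 1)) 0)) := by
    rw [← sub_nonneg, ← Finset.sum_sub_distrib]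
    have : ∀ j ∈ Finset.range n,
        sl j * ((∑ i, max (a i - u j) 0) - (∑ i, max (a i - u (j + 1)) 0))
          - sl j * ((∑ i, max (b i - u j) 0) - (∑ i, max (b i - u (j + 1)) 0))
        = sl j * D j - sl j * D (j + 1) := by
      intro j _; rw [hD]; ring
    rw [Finset.sum_congr rfl this, Finset.sum_sub_distrib]
    rcases Nat.eq_zero_or_pos n with hn0 | hn0
    · simp [hn0]
    obtain ⟨m, hm2⟩ : ∃ m, n = m + 1 := ⟨n - 1, by omega⟩
    rw [hm2] at D_n
    rw [hm2, Finset.sum_range_succ' (fun j => sl j * D j),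
      Finset.sum_range_succ (fun j => sl j * D (j + 1))]
    rw [D_zero, D_n]
    rw [mul_zero, mul_zero, add_zero, add_zero, sub_nonneg]
    have : ∀ j ∈ Finset.range m, sl j * D (j + 1) ≤ sl (j + 1) * D (j + 1) := by
      intro j hj
      rw [Finset.mem_range] at hj
      exact mul_le_mul_of_nonneg_right (sl_mono j (by omega)) (D_nonneg (j + 1))
    exact Finset.sum_le_sum this
  linarith

lemma hlp_concave {k : ℕ} {a b : Fin k → ℝ} (h : Majorizes a b) {S : Set ℝ} {g : ℝ → ℝ}
    (hg : ConcaveOn ℝ S g) (ha : ∀ i, a i ∈ S) (hb : ∀ i, b i ∈ S) :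
    ∑ i, g (a i) ≤ ∑ i, g (b i) := by
  have := hlp_convex h hg.neg ha hb
  simp only [Pi.neg_apply, Finset.sum_neg_distrib, neg_le_neg_iff] at this
  exact this

lemma convexOn_rpow_neg {r : ℝ} (hr : r < 0) :
    ConvexOn ℝ (Set.Ioi (0:ℝ)) fun t : ℝ => t ^ r := by
  have hint : interior (Set.Ioi (0:ℝ)) = Set.Ioi 0 := isOpen_Ioi.interior_eq
  refine convexOn_of_hasDerivWithinAt2_nonneg (convex_Ioi 0)
    (f' := fun t => r * t ^ (r - 1)) (f'' := fun t => r * ((r - 1) * t ^ (r - 2))) ?_ ?_ ?_ ?_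
  · intro t ht
    exact (Real.continuousAt_rpow_const t r (Or.inl (ne_of_gt ht))).continuousWithinAt
  · intro t ht
    rw [hint] at ht ⊢
    exact (Real.hasDerivAt_rpow_const (Or.inl (ne_of_gt ht))).hasDerivWithinAt
  · intro t ht
    rw [hint] at ht ⊢
    have h1 : HasDerivAt (fun s : ℝ => s ^ (r - 1)) ((r - 1) * t ^ (r - 1 - 1)) t :=
      Real.hasDerivAt_rpow_const (Or.inl (ne_of_gt ht))
    have h2 := h1.const_mul r
    have : r - 1 - 1 = r - 2 := by ring
    rw [this] at h2
    exact h2.hasDerivWithinAt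
  · intro t ht
    rw [hint] at ht
    have h1 : (0:ℝ) < t ^ (r - 2) := Real.rpow_pos_of_pos ht _
    have h2 : 0 < r * (r - 1) := mul_pos_of_neg_of_neg hr (by linarith)
    have := mul_pos h2 h1
    simpa [mul_assoc] using this.le

lemma sq_rpow_half (t r : ℝ) : (t ^ 2) ^ (r / 2) = |t| ^ r := by
  rw [← sq_abs, ← Real.rpow_natCast |t| 2, ← Real.rpow_mul (abs_nonneg t)]
  norm_num
  rw [show (2:ℝ) * (r / 2) = r by ring]

lemma sqv_mem_Ici {k : ℕ} (x : Fin k → ℝ) (i : Fin k) : sqv x i ∈ Set.Ici (0:ℝ) :=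
  sq_nonneg (x i)

lemma exists_zero_of_maj {k : ℕ} {x y : Fin k → ℝ} (h : Majorizes (sqv x) (sqv y))
    {j : Fin k} (hj : y j = 0) : ∃ i, x i = 0 := by
  classical
  obtain ⟨t, hcard, hsum⟩ := h.2 (Finset.univ.erase j)
  have hkpos : 0 < k := j.pos
  have hs : ∑ i ∈ Finset.univ.erase j, sqv y i = ∑ i, sqv y i :=
    Finset.sum_erase _ (by simp [sqv, hj])
  have hx : ∑ i, sqv x i ≤ ∑ i ∈ t, sqv x i := by
    rw [h.1, ← hs]; exact hsum
  have hcard' : t.card = k - 1 := by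
    rw [hcard, Finset.card_erase_of_mem (Finset.mem_univ j), Finset.card_univ,
      Fintype.card_fin]
  have hsd : ∑ i ∈ Finset.univ \ t, sqv x i ≤ 0 := by
    have := Finset.sum_sdiff (Finset.subset_univ t) (f := sqv x)
    linarith
  have hne : (Finset.univ \ t).Nonempty := by
    rw [← Finset.card_pos, Finset.card_sdiff_of_subset (Finset.subset_univ t), Finset.card_univ,
      Fintype.card_fin, hcard']
    omega
  obtain ⟨i, hi⟩ := hne
  refine ⟨i, ?_⟩
  have h0 : sqv x i = 0 := by
    have hle : sqv x i ≤ ∑ i ∈ Finset.univ \ t, sqv x i :=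
      Finset.single_le_sum (fun i _ => sq_nonneg (x i)) hi
    have : (0:ℝ) ≤ sqv x i := sq_nonneg (x i)
    linarith
  exact pow_eq_zero_iff (n := 2) (by norm_num) |>.mp h0

lemma eq_zero_of_sq_sum_zero {k : ℕ} {x : Fin k → ℝ} (h : ∑ i, sqv x i = 0) : x = 0 := by
  funext i
  have := (Finset.sum_eq_zero_iff_of_nonneg (fun i _ => sq_nonneg (x i))).mp h i
    (Finset.mem_univ i)
  exact pow_eq_zero_iff (n := 2) (by norm_num) |>.mp this

lemma sum_abs_rpow {k : ℕ} (x : Fin k → ℝ) (r : ℝ) :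
    ∑ j, |x j| ^ r = ∑ j, (sqv x j) ^ (r / 2) :=
  Finset.sum_congr rfl fun j _ => (sq_rpow_half (x j) r).symm

lemma pqMean_nonneg {k : ℕ} (p q : ℝ) (x : Fin k → ℝ) : 0 ≤ pqMean p q x := by
  unfold pqMean
  split_ifs
  · exact le_refl 0
  · exact le_refl 0
  · refine Real.rpow_nonneg (div_nonneg ?_ ?_) _ <;>
      exact Finset.sum_nonneg fun j _ => Real.rpow_nonneg (abs_nonneg _) _

/-- The `(p,q)`-mean is Schur²-concave if `q ≤ 0 ≤ p ≤ 2` and Schur²-convex if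
`0 ≤ q ≤ 2 ≤ p`. -/
theorem pqMean_schur2 (k : ℕ) (hk : 1 ≤ k) (p q : ℝ) (hpq : q < p) :
    (q ≤ 0 → 0 ≤ p → p ≤ 2 → Schur2Concave (fun x : Fin k → ℝ => pqMean p q x)) ∧
    (0 ≤ q → q ≤ 2 → 2 ≤ p → Schur2Convex (fun x : Fin k → ℝ => pqMean p q x)) := by
  have habs : ∀ (x : Fin k → ℝ) (r : ℝ), (0:ℝ) ≤ ∑ j, |x j| ^ r :=
    fun x r => Finset.sum_nonneg fun j _ => Real.rpow_nonneg (abs_nonneg _) _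
  have hepos : (0:ℝ) ≤ (p - q)⁻¹ := inv_nonneg.mpr (by linarith)
  constructor
  · -- Schur²-concave case : q ≤ 0 ≤ p ≤ 2
    intro hq0 hp0 hp2 x y hmaj
    simp only
    by_cases hx0 : x = 0
    · rw [hx0]; simp only [pqMean, if_pos rfl]; exact pqMean_nonneg p q y
    by_cases hxz : q < 0 ∧ ∃ j, x j = 0
    · rw [pqMean, if_neg hx0, if_pos hxz]; exact pqMean_nonneg p q y
    have hy0 : y ≠ 0 := by
      intro hy
      apply hx0
      apply eq_zero_of_sq_sum_zero
      rw [hmaj.1, hy]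
      simp [sqv]
    have hyz : ¬(q < 0 ∧ ∃ j, y j = 0) := by
      rintro ⟨hq, j, hj⟩
      exact hxz ⟨hq, exists_zero_of_maj hmaj hj⟩
    rw [pqMean, pqMean, if_neg hx0, if_neg hxz, if_neg hy0, if_neg hyz]
    -- numerator comparison
    have hnum : ∑ j, |x j| ^ p ≤ ∑ j, |y j| ^ p := by
      rw [sum_abs_rpow, sum_abs_rpow]
      exact hlp_concave hmaj (Real.concaveOn_rpow (by linarith) (by linarith))
        (sqv_mem_Ici x) (sqv_mem_Ici y)
    -- denominator comparison
    have hden : (∑ j, |y j| ^ q ≤ ∑ j, |x j| ^ q) ∧ (0 < ∑ j, |y j| ^ q) := by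
      rcases eq_or_lt_of_le hq0 with hq | hq
      · subst hq
        simp only [Real.rpow_zero, Finset.sum_const, Finset.card_univ, Fintype.card_fin,
          nsmul_eq_mul, mul_one]
        exact ⟨le_refl _, by exact_mod_cast Nat.pos_of_ne_zero (by omega)⟩
      · have hxne : ∀ j, x j ≠ 0 := by
          intro j hj
          exact hxz ⟨hq, j, hj⟩
        have hyne : ∀ j, y j ≠ 0 := by
          intro j hj
          obtain ⟨i, hi⟩ := exists_zero_of_maj hmaj hj
          exact hxne i hi
        constructor
        · rw [sum_abs_rpow, sum_abs_rpow]
          refine hlp_convex hmaj (convexOn_rpow_neg (by linarith : q / 2 < 0))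
            (fun i => lt_of_le_of_ne (sq_nonneg (x i)) (Ne.symm (pow_ne_zero 2 (hxne i))))
            (fun i => lt_of_le_of_ne (sq_nonneg (y i)) (Ne.symm (pow_ne_zero 2 (hyne i))))
        · refine Finset.sum_pos (fun j _ => Real.rpow_pos_of_pos (abs_pos.mpr (hyne j)) _) ?_
          exact Finset.univ_nonempty_iff.mpr (Fin.pos_iff_nonempty.mp (by omega))
    refine Real.rpow_le_rpow (div_nonneg (habs x p) (habs x q)) ?_ hepos
    exact div_le_div₀ (habs y p) hnum hden.2 hden.1
  · -- Schur²-convex case : 0 ≤ q ≤ 2 ≤ p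
    intro hq0 hq2 hp2 x y hmaj
    simp only
    by_cases hy0 : y = 0
    · rw [hy0]; simp only [pqMean, if_pos rfl]; exact pqMean_nonneg p q x
    have hx0 : x ≠ 0 := by
      intro hx
      apply hy0
      apply eq_zero_of_sq_sum_zero
      rw [← hmaj.1, hx]
      simp [sqv]
    have hqn : ¬ q < 0 := not_lt.mpr hq0
    have hxz : ¬(q < 0 ∧ ∃ j, x j = 0) := fun h => hqn h.1
    have hyz : ¬(q < 0 ∧ ∃ j, y j = 0) := fun h => hqn h.1
    rw [pqMean, pqMean, if_neg hx0, if_neg hxz, if_neg hy0, if_neg hyz]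
    have hnum : ∑ j, |y j| ^ p ≤ ∑ j, |x j| ^ p := by
      rw [sum_abs_rpow, sum_abs_rpow]
      exact hlp_convex hmaj (convexOn_rpow (by linarith)) (sqv_mem_Ici x) (sqv_mem_Ici y)
    have hden : ∑ j, |x j| ^ q ≤ ∑ j, |y j| ^ q := by
      rw [sum_abs_rpow, sum_abs_rpow]
      exact hlp_concave hmaj (Real.concaveOn_rpow (by linarith) (by linarith))
        (sqv_mem_Ici x) (sqv_mem_Ici y)
    have hdenpos : 0 < ∑ j, |x j| ^ q := by
      obtain ⟨i, hi⟩ := Function.ne_iff.mp hx0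
      refine Finset.sum_pos' (fun j _ => Real.rpow_nonneg (abs_nonneg _) _) ?_
      exact ⟨i, Finset.mem_univ i, Real.rpow_pos_of_pos (abs_pos.mpr hi) _⟩
    refine Real.rpow_le_rpow (div_nonneg (habs y p) ?_) ?_ hepos
    · exact le_of_lt (lt_of_lt_of_le hdenpos hden)
    · exact div_le_div₀ (habs x p) hnum hdenpos hden
end
end

section
/- Let k ≥ 1 be an integer. The (2,2)-mean ⟨x⟩_{2,2} := ∏_{j=1}^k |x_j|^{x_j² / ∑_{i=1}^k x_i²} (with the conventions 0⁰ := 1 and ⟨0⟩_{2,2} := 0) is Schur²-convex on ℝ^k. -/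
open MeasureTheory ProbabilityTheory Filter
open scoped ENNReal

noncomputable section

open Classical in
/-- The `(2,2)`-mean `⟨x⟩_{2,2} = ∏_j |x_j|^(x_j² / ∑_i x_i²)`, with the conventions
`0⁰ := 1` (which is `Real.rpow`'s convention) and `⟨0⟩_{2,2} := 0`. -/
noncomputable def mean22 {k : ℕ} (x : Fin k → ℝ) : ℝ :=
  if x = 0 then 0
  else ∏ j, |x j| ^ ((x j) ^ 2 / (∑ i, (x i) ^ 2))

/-!
Taking logarithms, `log ⟨x⟩_{2,2} = (∑ x_j² log x_j²) / (2 ∑ x_i²)`. Majorization fixes the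
denominator and `t ↦ t log t` is convex, so the claim is Karamata's inequality for `x² ⪰ y²`.
For Karamata, sort both vectors decreasingly and write `φ(a_i) - φ(b_i) = c_i (a_i - b_i)` with
`c_i` the secant slope of `φ` between `b_i` and `a_i`. By convexity the `c_i` decrease, and the
partial sums of `a - b` are nonnegative with total `0`, so Abel summation gives
`∑ c_i (a_i - b_i) ≥ 0`.
-/

open Finset

lemma mul_sum_range_le_sum_range_mul {c d : ℕ → ℝ} {n : ℕ} {γ : ℝ}
    (hc : ∀ i j, i < j → j < n → d i ≠ 0 → d j ≠ 0 → c j ≤ c i)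
    (hγ : ∀ i < n, d i ≠ 0 → γ ≤ c i)
    (hd : ∀ j ≤ n, 0 ≤ ∑ i ∈ range j, d i) :
    γ * ∑ i ∈ range n, d i ≤ ∑ i ∈ range n, c i * d i := by
  induction n generalizing γ with
  | zero => simp
  | succ n ih =>
    have hc' : ∀ i j, i < j → j < n → d i ≠ 0 → d j ≠ 0 → c j ≤ c i :=
      fun i j hij hj => hc i j hij (by omega)
    have hd' : ∀ j ≤ n, 0 ≤ ∑ i ∈ range j, d i := fun j hj => hd j (by omega)
    rw [sum_range_succ, sum_range_succ]
    by_cases hdn : d n = 0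
    · simpa [hdn] using ih hc' (fun i hi => hγ i (by omega)) hd'
    · have hprefix := ih hc' (fun i hi hdi => hc i n hi (by omega) hdi hdn) hd'
      have hlast : γ * (∑ i ∈ range n, d i + d n) ≤ c n * (∑ i ∈ range n, d i + d n) :=
        mul_le_mul_of_nonneg_right (hγ n (by omega) hdn)
          (sum_range_succ d n ▸ hd (n + 1) le_rfl)
      linarith

lemma ConvexOn.slope_le_slope {s : Set ℝ} {f : ℝ → ℝ} (hf : ConvexOn ℝ s f) {x y x' y' : ℝ}
    (hx : x ∈ s) (hy : y ∈ s) (hx' : x' ∈ s) (hy' : y' ∈ s) (hxy : x ≠ y) (hxy' : x' ≠ y')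
    (hxx' : x ≤ x') (hyy' : y ≤ y') : slope f x y ≤ slope f x' y' := by
  by_cases hxy'' : x = y'
  · subst hxy''
    rw [slope_comm f x' x]
    exact hf.slope_mono hx ⟨hy, hxy.symm⟩ ⟨hx', hxy'⟩ (hyy'.trans hxx')
  · calc slope f x y ≤ slope f x y' :=
          hf.slope_mono hx ⟨hy, hxy.symm⟩ ⟨hy', Ne.symm hxy''⟩ hyy'
      _ = slope f y' x := slope_comm f x y'
      _ ≤ slope f y' x' := hf.slope_mono hy' ⟨hx, hxy''⟩ ⟨hx', hxy'⟩ hxx'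
      _ = slope f x' y' := slope_comm f y' x'

theorem ConvexOn.sum_range_le_of_sum_range_le {s : Set ℝ} {φ : ℝ → ℝ} (hφ : ConvexOn ℝ s φ)
    {a b : ℕ → ℝ} {n : ℕ} (ha : ∀ i < n, a i ∈ s) (hb : ∀ i < n, b i ∈ s)
    (ha_anti : AntitoneOn a (Set.Iio n)) (hb_anti : AntitoneOn b (Set.Iio n))
    (hpartial : ∀ j ≤ n, ∑ i ∈ range j, b i ≤ ∑ i ∈ range j, a i)
    (htotal : ∑ i ∈ range n, b i = ∑ i ∈ range n, a i) :
    ∑ i ∈ range n, φ (b i) ≤ ∑ i ∈ range n, φ (a i) := by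
  set c := fun i => slope φ (b i) (a i)
  set d := fun i => a i - b i
  -- `slope φ x x = 0`, so this also holds at ties `a i = b i`, where the Abel lemma asks
  -- nothing of `c`.
  have hslope : ∀ i, φ (a i) - φ (b i) = c i * d i := fun i => by
    simp only [c, d, mul_comm (slope φ (b i) (a i)), ← smul_eq_mul, sub_smul_slope, vsub_eq_sub]
  have habel := mul_sum_range_le_sum_range_mul (c := c) (d := d) (γ := -∑ i ∈ range n, |c i|)
    (fun i j hij hjn hdi hdj => hφ.slope_le_slope (hb j hjn) (ha j hjn) (hb i (hij.trans hjn))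
      (ha i (hij.trans hjn)) (fun h => hdj (by simp [d, h])) (fun h => hdi (by simp [d, h]))
      (hb_anti (hij.trans hjn) hjn hij.le) (ha_anti (hij.trans hjn) hjn hij.le))
    (fun i hi _ => (neg_le_neg (single_le_sum (fun j _ => abs_nonneg (c j))
      (mem_range.2 hi))).trans (neg_abs_le (c i)))
    (fun j hj => by simpa [d, sum_sub_distrib] using hpartial j hj)
  have hd_total : ∑ i ∈ range n, d i = 0 := by simp [d, sum_sub_distrib, htotal]
  rw [hd_total, mul_zero, ← sum_congr rfl (fun i _ => hslope i), sum_sub_distrib] at habel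
  linarith

lemma AntitoneOn.sum_le_sum_range_card {f : ℕ → ℝ} {n : ℕ} (hf : AntitoneOn f (Set.Iio n))
    {t : Finset ℕ} (ht : t ⊆ range n) : ∑ i ∈ t, f i ≤ ∑ i ∈ range t.card, f i := by
  induction t using Finset.induction_on_max with
  | empty => simp
  | insert x t hlt ih =>
    have hx : x ∉ t := fun h => (hlt x h).false
    have hxn : x < n := mem_range.1 (ht (mem_insert_self x t))
    have hcard : t.card ≤ x := by
      simpa using card_le_card (fun y hy => mem_range.2 (hlt y hy) : t ⊆ range x)
    rw [sum_insert hx, card_insert_of_notMem hx, sum_range_succ, add_comm]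
    exact add_le_add (ih ((subset_insert x t).trans ht))
      (hf (hcard.trans_lt hxn) hxn hcard)

section DecreasingRearrangement

variable {k : ℕ}

def decreasingRearrangement (a : Fin k → ℝ) (n : ℕ) : ℝ :=
  if h : n < k then a (Tuple.sort (-a) ⟨n, h⟩) else 0

lemma decreasingRearrangement_of_lt (a : Fin k → ℝ) (i : Fin k) :
    decreasingRearrangement a i = a (Tuple.sort (-a) i) :=
  dif_pos i.isLt

lemma antitoneOn_decreasingRearrangement (a : Fin k → ℝ) :
    AntitoneOn (decreasingRearrangement a) (Set.Iio k) := by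
  intro i hi j hj hij
  lift i to Fin k using hi
  lift j to Fin k using hj
  simp only [decreasingRearrangement_of_lt]
  exact neg_le_neg_iff.1 (Tuple.monotone_sort (-a) (show i ≤ j from hij))

lemma sum_range_comp_decreasingRearrangement (a : Fin k → ℝ) (g : ℝ → ℝ) :
    ∑ i ∈ range k, g (decreasingRearrangement a i) = ∑ i, g (a i) := by
  rw [← Fin.sum_univ_eq_sum_range]
  simp only [decreasingRearrangement_of_lt]
  exact Equiv.sum_comp (Tuple.sort (-a)) (fun i => g (a i))

lemma sum_le_sum_range_card_decreasingRearrangement (a : Fin k → ℝ) (t : Finset (Fin k)) :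
    ∑ i ∈ t, a i ≤ ∑ i ∈ range t.card, decreasingRearrangement a i := by
  set e : Fin k ↪ ℕ := (Tuple.sort (-a)).symm.toEmbedding.trans Fin.valEmbedding
  have hsum : ∑ i ∈ t.map e, decreasingRearrangement a i = ∑ i ∈ t, a i := by
    simp [e, decreasingRearrangement_of_lt]
  have hsub : t.map e ⊆ range k := fun i hi => by
    obtain ⟨j, -, rfl⟩ := mem_map.1 hi
    exact mem_range.2 (Fin.isLt _)
  simpa [hsum] using (antitoneOn_decreasingRearrangement a).sum_le_sum_range_card hsub

lemma exists_card_eq_sum_range_decreasingRearrangement (a : Fin k → ℝ) {j : ℕ} (hj : j ≤ k) :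
    ∃ s : Finset (Fin k), s.card = j ∧
      ∑ i ∈ range j, decreasingRearrangement a i = ∑ i ∈ s, a i := by
  refine ⟨univ.map ((Fin.castLEEmb hj).trans (Tuple.sort (-a)).toEmbedding), by simp, ?_⟩
  rw [← Fin.sum_univ_eq_sum_range, sum_map]
  exact sum_congr rfl fun i _ => decreasingRearrangement_of_lt a (Fin.castLE hj i)

lemma Majorizes.sum_range_decreasingRearrangement_le {a b : Fin k → ℝ} (h : Majorizes a b)
    {j : ℕ} (hj : j ≤ k) :
    ∑ i ∈ range j, decreasingRearrangement b i ≤ ∑ i ∈ range j, decreasingRearrangement a i := by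
  obtain ⟨s, rfl, hs⟩ := exists_card_eq_sum_range_decreasingRearrangement b hj
  obtain ⟨t, ht, hst⟩ := h.2 s
  rw [hs, ← ht]
  exact hst.trans (sum_le_sum_range_card_decreasingRearrangement a t)

theorem Majorizes.sum_le_sum_of_convexOn {a b : Fin k → ℝ} (h : Majorizes a b) {s : Set ℝ}
    {φ : ℝ → ℝ} (hφ : ConvexOn ℝ s φ) (ha : ∀ i, a i ∈ s) (hb : ∀ i, b i ∈ s) :
    ∑ i, φ (b i) ≤ ∑ i, φ (a i) := by
  have hmem : ∀ c : Fin k → ℝ, (∀ i, c i ∈ s) → ∀ i < k, decreasingRearrangement c i ∈ s :=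
    fun c hc i hi => by
      lift i to Fin k using hi
      exact decreasingRearrangement_of_lt c i ▸ hc _
  rw [← sum_range_comp_decreasingRearrangement a, ← sum_range_comp_decreasingRearrangement b]
  refine hφ.sum_range_le_of_sum_range_le (hmem a ha) (hmem b hb)
    (antitoneOn_decreasingRearrangement a) (antitoneOn_decreasingRearrangement b)
    (fun j hj => h.sum_range_decreasingRearrangement_le hj) ?_
  exact (sum_range_comp_decreasingRearrangement b id).trans
    (h.1.symm.trans (sum_range_comp_decreasingRearrangement a id).symm)

end DecreasingRearrangement

lemma sum_sqv_pos_iff {k : ℕ} {x : Fin k → ℝ} : 0 < ∑ i, sqv x i ↔ x ≠ 0 := by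
  have hnonneg : ∀ i, 0 ≤ sqv x i := fun i => sq_nonneg (x i)
  rw [(Fintype.sum_nonneg hnonneg).lt_iff_ne', Ne, Fintype.sum_eq_zero_iff_of_nonneg hnonneg]
  simp [sqv, funext_iff]

lemma mean22_nonneg {k : ℕ} (x : Fin k → ℝ) : 0 ≤ mean22 x := by
  unfold mean22
  split_ifs
  exacts [le_rfl, prod_nonneg fun j _ => Real.rpow_nonneg (abs_nonneg _) _]

lemma mean22_eq_exp {k : ℕ} {x : Fin k → ℝ} (hx : x ≠ 0) :
    mean22 x = Real.exp ((∑ j, sqv x j * Real.log (sqv x j)) / (2 * ∑ i, sqv x i)) := by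
  rw [mean22, if_neg hx, sum_div, Real.exp_sum]
  refine prod_congr rfl fun j _ => ?_
  by_cases hj : x j = 0
  · simp [sqv, hj]
  · rw [Real.rpow_def_of_pos (abs_pos.2 hj), Real.log_abs, sqv, Real.log_pow]
    congr 1
    simp only [sqv, Nat.cast_ofNat]
    ring

theorem mean22_schur2Convex_general (k : ℕ) :
    Schur2Convex (fun x : Fin k → ℝ => mean22 x) := by
  intro x y h
  dsimp only
  by_cases hy : y = 0
  · simpa [mean22, hy] using mean22_nonneg x
  have hpos : 0 < ∑ i, sqv x i := h.1 ▸ sum_sqv_pos_iff.2 hy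
  rw [mean22_eq_exp hy, mean22_eq_exp (sum_sqv_pos_iff.1 hpos), Real.exp_le_exp, ← h.1]
  gcongr ?_ / _
  exact h.sum_le_sum_of_convexOn Real.convexOn_mul_log (fun i => sq_nonneg (x i))
    (fun i => sq_nonneg (y i))

/-- The `(2,2)`-mean is Schur²-convex on `ℝ^k`. -/
theorem mean22_schur2Convex (k : ℕ) (hk : 1 ≤ k) :
    Schur2Convex (fun x : Fin k → ℝ => mean22 x) :=
  mean22_schur2Convex_general k
end
end

section
/- Let k ≥ 1 be an integer, p ∈ [2,∞), a ≥ 0, and ε ≥ 0. Then the set Ĥ := {x ∈ ℝ^k : there exists σ ∈ {−1,1}^k with ⟨x − aσ⟩_p ≤ ε} (where aσ := (aσ₁,…,aσ_k)) is Schur²-convex. -/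
open MeasureTheory ProbabilityTheory Filter
open scoped ENNReal

noncomputable section

open Classical in
/-- The `p`-mean `⟨x⟩_p` for `p ∈ [-∞, ∞]` (coded as `p : EReal`):
`⟨x⟩_p = ((1/k) ∑ |x_j|^p)^(1/p)` for real `p ≠ 0`, with `⟨x⟩_p := 0` when `p < 0` and
some `x_j = 0`; `⟨x⟩_0 = ∏ |x_j|^(1/k)`; `⟨x⟩_∞ = max |x_j|`; `⟨x⟩_{-∞} = min |x_j|`. -/
noncomputable def pMean {k : ℕ} (p : EReal) (x : Fin k → ℝ) : ℝ :=
  if p = ⊤ then ⨆ j, |x j|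
  else if p = ⊥ then ⨅ j, |x j|
  else if p = 0 then ∏ j, |x j| ^ ((k : ℝ)⁻¹)
  else if p.toReal < 0 ∧ ∃ j, x j = 0 then 0
  else ((k : ℝ)⁻¹ * ∑ j, |x j| ^ p.toReal) ^ (p.toReal)⁻¹

/-! Choose `σ` to be the sign vector of `y`, so that `|yᵢ - a σᵢ|^p = φ(yᵢ²)` with
`φ(t) = |√t - a|^p`. For `p ≥ 2` and `a ≥ 0` the function `φ` is convex on `[0, ∞)`: its
derivative at `t = u²` is `p/2 · |u - a|^(p-2) (1 - a/u)`, nondecreasing in `u > 0`. Karamata's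
inequality (Abel summation against the decreasing secant slopes of `φ` along the sorted vectors)
turns `y² ⪯ x²` into `∑ φ(yᵢ²) ≤ ∑ φ(xᵢ²)`, and `φ(xᵢ²) = ||xᵢ| - a|^p ≤ |xᵢ - a sᵢ|^p` for every
sign vector `s`. -/

open Finset

section Karamata

variable {k : ℕ}

def initSeg (k j : ℕ) : Finset (Fin k) := {i | (i : ℕ) < j}

@[simp]
lemma mem_initSeg {j : ℕ} {i : Fin k} : i ∈ initSeg k j ↔ (i : ℕ) < j := by
  simp [initSeg]

lemma initSeg_succ {j : ℕ} (hj : j < k) : initSeg k (j + 1) = insert ⟨j, hj⟩ (initSeg k j) := by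
  ext i
  simp only [mem_insert, mem_initSeg, Fin.ext_iff]
  omega

lemma initSeg_of_le {j : ℕ} (hj : k ≤ j) : initSeg k j = univ := by
  ext i
  simp only [mem_initSeg, mem_univ, iff_true]
  omega

lemma Finset.sum_le_sum_of_card_eq {ι : Type*} [DecidableEq ι] {s t : Finset ι} {f : ι → ℝ}
    (hcard : #s = #t) (hf : ∀ i ∈ s \ t, ∀ j ∈ t \ s, f i ≤ f j) :
    ∑ i ∈ s, f i ≤ ∑ i ∈ t, f i := by
  rw [← sum_sdiff_le_sum_sdiff]
  rcases (s \ t).eq_empty_or_nonempty with hst | ⟨i₀, hi₀⟩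
  · have : #(t \ s) = 0 := by rw [← card_sdiff_comm hcard, hst, card_empty]
    rw [hst, card_eq_zero.1 this]
  · set M := (s \ t).sup' ⟨i₀, hi₀⟩ f
    calc ∑ i ∈ s \ t, f i ≤ #(s \ t) • M := sum_le_card_nsmul _ _ _ fun i hi => le_sup' f hi
      _ = #(t \ s) • M := by rw [card_sdiff_comm hcard]
      _ ≤ ∑ j ∈ t \ s, f j :=
        card_nsmul_le_sum _ _ _ fun j hj => sup'_le _ _ fun i hi => hf i hi j hj

lemma Majorizes.comp_perm {x y : Fin k → ℝ} (h : Majorizes x y) (σ τ : Equiv.Perm (Fin k)) :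
    Majorizes (x ∘ σ) (y ∘ τ) := by
  refine ⟨by simp only [Function.comp_apply, Equiv.sum_comp, h.1], fun s => ?_⟩
  obtain ⟨t, hcard, hle⟩ := h.2 (s.map τ.toEmbedding)
  refine ⟨t.map σ.symm.toEmbedding, by simpa using hcard, ?_⟩
  simpa [sum_map] using hle

lemma Majorizes.sum_initSeg_le {a b : Fin k → ℝ} (h : Majorizes a b) (ha : Antitone a) (j : ℕ) :
    ∑ i ∈ initSeg k j, b i ≤ ∑ i ∈ initSeg k j, a i := by
  obtain ⟨t, hcard, hle⟩ := h.2 (initSeg k j)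
  refine hle.trans (sum_le_sum_of_card_eq hcard fun i hi l hl => ha ?_)
  simp only [Finset.mem_sdiff, mem_initSeg, not_lt] at hi hl
  exact Fin.le_def.2 (by omega)

/-- Abel summation, for `c` antitone on the support of `D`. -/
lemma sum_mul_nonneg_of_sum_initSeg_nonneg (c D : Fin k → ℝ)
    (hD : ∀ j, 0 ≤ ∑ i ∈ initSeg k j, D i) (hsum : ∑ i, D i = 0)
    (hc : ∀ i j, i ≤ j → D i ≠ 0 → D j ≠ 0 → c j ≤ c i) :
    0 ≤ ∑ i, c i * D i := by
  have key : ∀ j ≤ k, ∀ γ : ℝ, (∀ i : Fin k, (i : ℕ) < j → D i ≠ 0 → γ ≤ c i) →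
      γ * ∑ i ∈ initSeg k j, D i ≤ ∑ i ∈ initSeg k j, c i * D i := by
    intro j
    induction j with
    | zero => simp [initSeg]
    | succ j ih =>
      intro hj γ hγ
      set m : Fin k := ⟨j, hj⟩
      have hm : m ∉ initSeg k j := by simp [m]
      have hS := hD (j + 1)
      rw [initSeg_succ hj, sum_insert hm] at hS ⊢
      rw [sum_insert hm]
      by_cases hDm : D m = 0
      · rw [hDm, mul_zero, zero_add, zero_add]
        exact ih (by omega) γ fun i hi => hγ i (by omega)
      · have hcm := ih (by omega) (c m) fun i hi hDi => hc i m (Fin.le_def.2 hi.le) hDi hDm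
        calc γ * (D m + ∑ i ∈ initSeg k j, D i) ≤ c m * (D m + ∑ i ∈ initSeg k j, D i) :=
              mul_le_mul_of_nonneg_right (hγ m (by simp [m]) hDm) hS
          _ ≤ c m * D m + ∑ i ∈ initSeg k j, c i * D i := by linarith
  have hlow (i : Fin k) : -∑ l, |c l| ≤ c i :=
    neg_le.1 ((neg_le_abs (c i)).trans (single_le_sum (fun l _ => abs_nonneg (c l)) (mem_univ i)))
  simpa [initSeg_of_le le_rfl, hsum] using key k le_rfl _ fun i _ _ => hlow i

lemma ConvexOn.slope_le_slope_s10 {S : Set ℝ} {f : ℝ → ℝ} (hf : ConvexOn ℝ S f)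
    {x₁ y₁ x₂ y₂ : ℝ} (hx₁ : x₁ ∈ S) (hy₁ : y₁ ∈ S) (hx₂ : x₂ ∈ S) (hy₂ : y₂ ∈ S)
    (hx : x₁ ≤ x₂) (hy : y₁ ≤ y₂) (h₁ : x₁ ≠ y₁) (h₂ : x₂ ≠ y₂) :
    slope f x₁ y₁ ≤ slope f x₂ y₂ := by
  by_cases hxy : x₁ = y₂
  · subst hxy
    have hyx : y₁ ≠ x₂ := by rintro rfl; exact h₁ (by linarith)
    calc slope f x₁ y₁ = slope f y₁ x₁ := slope_comm f x₁ y₁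
      _ ≤ slope f y₁ x₂ := hf.slope_mono hy₁ ⟨hx₁, h₁⟩ ⟨hx₂, hyx.symm⟩ hx
      _ = slope f x₂ y₁ := slope_comm f y₁ x₂
      _ ≤ slope f x₂ x₁ := hf.slope_mono hx₂ ⟨hy₁, hyx⟩ ⟨hx₁, h₂.symm⟩ hy
  · calc slope f x₁ y₁ ≤ slope f x₁ y₂ := hf.slope_mono hx₁ ⟨hy₁, h₁.symm⟩ ⟨hy₂, Ne.symm hxy⟩ hy
      _ = slope f y₂ x₁ := slope_comm f x₁ y₂
      _ ≤ slope f y₂ x₂ := hf.slope_mono hy₂ ⟨hx₁, hxy⟩ ⟨hx₂, h₂⟩ hx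
      _ = slope f x₂ y₂ := slope_comm f y₂ x₂

variable {S : Set ℝ} {f : ℝ → ℝ}

lemma Majorizes.sum_le_sum_of_antitone (hf : ConvexOn ℝ S f) {a b : Fin k → ℝ}
    (haS : ∀ i, a i ∈ S) (hbS : ∀ i, b i ∈ S) (ha : Antitone a) (hb : Antitone b)
    (h : Majorizes a b) : ∑ i, f (b i) ≤ ∑ i, f (a i) := by
  have hslope (i : Fin k) : f (a i) - f (b i) = slope f (b i) (a i) * (a i - b i) := by
    rw [mul_comm, ← smul_eq_mul, sub_smul_slope, vsub_eq_sub]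
  have := sum_mul_nonneg_of_sum_initSeg_nonneg (fun i => slope f (b i) (a i)) (a - b)
    (fun j => by simpa [sum_sub_distrib] using h.sum_initSeg_le ha j)
    (by simp [sum_sub_distrib, h.1])
    (fun i j hij hi hj => hf.slope_le_slope_s10 (hbS j) (haS j) (hbS i) (haS i) (hb hij) (ha hij)
      (by simpa [sub_eq_zero, eq_comm] using hj) (by simpa [sub_eq_zero, eq_comm] using hi))
  simp only [Pi.sub_apply, ← hslope, sum_sub_distrib] at this
  linarith

/-- Karamata's inequality. -/
theorem Majorizes.sum_le_sum_of_convexOn_s10 (hf : ConvexOn ℝ S f) {x y : Fin k → ℝ}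
    (hxS : ∀ i, x i ∈ S) (hyS : ∀ i, y i ∈ S) (h : Majorizes x y) :
    ∑ i, f (y i) ≤ ∑ i, f (x i) := by
  let σ (v : Fin k → ℝ) : Equiv.Perm (Fin k) := Fin.revPerm.trans (Tuple.sort v)
  have hanti (v : Fin k → ℝ) : Antitone (v ∘ σ v) :=
    (Tuple.monotone_sort v).comp_antitone fun _ _ => Fin.rev_le_rev.2
  have := (h.comp_perm (σ x) (σ y)).sum_le_sum_of_antitone hf (fun i => hxS _) (fun i => hyS _)
    (hanti x) (hanti y)
  simpa only [Function.comp_apply, Equiv.sum_comp (σ x) (fun i => f (x i)),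
    Equiv.sum_comp (σ y) (fun i => f (y i))] using this

end Karamata

section Convexity

open Real

lemma monotoneOn_abs_sub_rpow_mul_one_sub_div {a q : ℝ} (ha : 0 ≤ a) (hq : 0 ≤ q) :
    MonotoneOn (fun u => |u - a| ^ q * (1 - a / u)) (Set.Ioi 0) := by
  intro u (hu : 0 < u) v _ huv
  have hquot : 1 - a / u ≤ 1 - a / v := by gcongr
  rcases le_total a u with hau | hua
  · have hpow : |u - a| ^ q ≤ |v - a| ^ q := by
      rw [abs_of_nonneg (by linarith), abs_of_nonneg (by linarith)]
      gcongr
    have h₀ : 0 ≤ 1 - a / u := by rw [sub_nonneg, div_le_one hu]; exact hau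
    exact mul_le_mul hpow hquot h₀ (by positivity)
  have hu₀ : 1 - a / u ≤ 0 := by rw [sub_nonpos, le_div_iff₀ hu]; linarith
  rcases le_total v a with hva | hav
  · have hpow : |v - a| ^ q ≤ |u - a| ^ q := by
      rw [abs_of_nonpos (by linarith), abs_of_nonpos (by linarith)]
      gcongr
      linarith
    calc |u - a| ^ q * (1 - a / u) ≤ |v - a| ^ q * (1 - a / u) :=
          mul_le_mul_of_nonpos_right hpow hu₀
      _ ≤ |v - a| ^ q * (1 - a / v) := mul_le_mul_of_nonneg_left hquot (by positivity)
  · have hv₀ : 0 ≤ 1 - a / v := by rw [sub_nonneg, div_le_one (hu.trans_le huv)]; exact hav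
    exact (mul_nonpos_of_nonneg_of_nonpos (by positivity) hu₀).trans (by positivity)

lemma hasDerivAt_abs_sqrt_sub_rpow {a p t : ℝ} (hp : 1 < p) (ht : 0 < t) :
    HasDerivAt (fun t => |√t - a| ^ p) (p / 2 * (|√t - a| ^ (p - 2) * (1 - a / √t))) t := by
  have hsqrt : 0 < √t := sqrt_pos.2 ht
  refine ((hasDerivAt_abs_rpow (√t - a) hp).comp t
    ((hasDerivAt_sqrt ht.ne').sub_const a)).congr_deriv ?_
  field_simp

theorem convexOn_abs_sqrt_sub_rpow {a p : ℝ} (ha : 0 ≤ a) (hp : 2 ≤ p) :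
    ConvexOn ℝ (Set.Ici 0) (fun t => |√t - a| ^ p) := by
  have hp₁ : 1 < p := by linarith
  refine MonotoneOn.convexOn_of_deriv (convex_Ici 0) ?_ ?_ ?_
  · exact (Continuous.rpow_const (by fun_prop) fun _ => Or.inr (by linarith)).continuousOn
  · rw [interior_Ici]
    exact fun t ht => (hasDerivAt_abs_sqrt_sub_rpow hp₁ ht).differentiableAt.differentiableWithinAt
  · rw [interior_Ici]
    intro s hs t ht hst
    rw [(hasDerivAt_abs_sqrt_sub_rpow hp₁ hs).deriv, (hasDerivAt_abs_sqrt_sub_rpow hp₁ ht).deriv]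
    exact mul_le_mul_of_nonneg_left (monotoneOn_abs_sub_rpow_mul_one_sub_div ha (by linarith)
      (sqrt_pos.2 hs) (sqrt_pos.2 ht) (sqrt_le_sqrt hst)) (by linarith)

end Convexity

lemma pMean_coe_of_pos {k : ℕ} {p : ℝ} (hp : 0 < p) (v : Fin k → ℝ) :
    pMean (p : EReal) v = ((k : ℝ)⁻¹ * ∑ j, |v j| ^ p) ^ p⁻¹ := by
  have hp' : (p : EReal) ≠ 0 := by exact_mod_cast hp.ne'
  simp [pMean, hp', hp.not_gt]

lemma pMean_le_pMean_of_sum_le {k : ℕ} {p : ℝ} (hp : 0 < p) {v w : Fin k → ℝ}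
    (h : ∑ j, |v j| ^ p ≤ ∑ j, |w j| ^ p) : pMean (p : EReal) v ≤ pMean (p : EReal) w := by
  rw [pMean_coe_of_pos hp, pMean_coe_of_pos hp]
  gcongr

lemma abs_sub_mul_ite_nonneg (w a : ℝ) : |w - a * (if 0 ≤ w then 1 else -1)| = |(|w| - a)| := by
  split_ifs with hw
  · rw [abs_of_nonneg hw, mul_one]
  · rw [abs_of_neg (not_le.1 hw), ← abs_neg]
    ring_nf

lemma abs_abs_sub_le_abs_sub_mul {w a s : ℝ} (ha : 0 ≤ a) (hs : s = 1 ∨ s = -1) :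
    |(|w| - a)| ≤ |w - a * s| := by
  have has : |a * s| = a := by rcases hs with rfl | rfl <;> simp [abs_of_nonneg ha]
  simpa [has] using abs_abs_sub_abs_le_abs_sub w (a * s)

theorem hatB_schur2ConvexSet_general (k : ℕ) (p : ℝ) (hp : 2 ≤ p)
    (a : ℝ) (ha : 0 ≤ a) (ε : ℝ) :
    Schur2ConvexSet {x : Fin k → ℝ |
      ∃ s : Fin k → ℝ, (∀ i, s i = 1 ∨ s i = -1) ∧
        pMean (p : EReal) (fun i => x i - a * s i) ≤ ε} := by
  rintro x y ⟨s, hs, hx⟩ hxy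
  refine ⟨fun i => if 0 ≤ y i then 1 else -1, fun i => by by_cases h : 0 ≤ y i <;> simp [h],
    hx.trans' (pMean_le_pMean_of_sum_le (by linarith) ?_)⟩
  calc ∑ i, |y i - a * (if 0 ≤ y i then 1 else -1)| ^ p
      = ∑ i, |√(sqv y i) - a| ^ p := by simp only [sqv, Real.sqrt_sq_eq_abs, abs_sub_mul_ite_nonneg]
    _ ≤ ∑ i, |√(sqv x i) - a| ^ p :=
      hxy.sum_le_sum_of_convexOn_s10 (convexOn_abs_sqrt_sub_rpow ha hp) (fun i => sq_nonneg (x i))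
        (fun i => sq_nonneg (y i))
    _ ≤ ∑ i, |x i - a * s i| ^ p := sum_le_sum fun i _ => by
      rw [sqv, Real.sqrt_sq_eq_abs]
      exact Real.rpow_le_rpow (abs_nonneg _) (abs_abs_sub_le_abs_sub_mul ha (hs i)) (by linarith)

/-- For `p ∈ [2,∞)`, `a ≥ 0`, `ε ≥ 0`, the set
`Ĥ = {x : ∃ σ ∈ {-1,1}^k, ⟨x - aσ⟩_p ≤ ε}` is Schur²-convex. -/
theorem hatB_schur2ConvexSet (k : ℕ) (hk : 1 ≤ k) (p : ℝ) (hp : 2 ≤ p)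
    (a : ℝ) (ha : 0 ≤ a) (ε : ℝ) (hε : 0 ≤ ε) :
    Schur2ConvexSet {x : Fin k → ℝ |
      ∃ s : Fin k → ℝ, (∀ i, s i = 1 ∨ s i = -1) ∧
        pMean (p : EReal) (fun i => x i - a * s i) ≤ ε} :=
  hatB_schur2ConvexSet_general k p hp a ha ε
end
end
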